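/- arXiv:1210.0402 — 4 statements merged into one kernel-verified Lean document; each statement's English description precedes it below -/
import Mathlib

section
/- Let f be continuous on the closed unit disk and holomorphic on the open unit disk (i.e. f is in the disk algebra), with f(ζ) ≠ 0 for all ζ ∈ 𝕋. If the winding number about 0 of the boundary restriction f|_𝕋 is 0, then f(z) ≠ 0 for all z in the open unit disk 𝔻. -/
open Complex Metric Set Real

/-- `g` (viewed as a loop `t ↦ g (exp (i t))`) has winding number `n` about the origin. -/
def HasWindingNumber (g : ℂ → ℂ) (n : ℤ) : Prop :=
  ∃ θ : ℝ → ℝ, Continuous θ ∧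
    (∀ t : ℝ, g (Complex.exp (t * Complex.I)) =
      (‖g (Complex.exp (t * Complex.I))‖ : ℂ) *
        Complex.exp (θ t * Complex.I)) ∧
    θ (2 * Real.pi) - θ 0 = 2 * Real.pi * n

/-!
A polynomial factors as `c * ∏ (z - b)` over its roots, and `z - b` winds once around `0` along
the unit circle if `‖b‖ < 1` and not at all if `‖b‖ > 1`; so the winding number of a polynomial
without zeros on the circle counts its zeros in the disc. A function `f` of the disc algebra is a
uniform limit of polynomials on the closed disc (dilate, then truncate the Taylor series). If
`f z₀ = 0` with `‖z₀‖ < 1`, take a polynomial `P` within `min_𝕋 ‖f‖ / 2` of `f`: then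
`Q = P - P z₀` stays closer to `f` than `‖f‖` on the circle, so `Q / f` has a continuous argument
there and `Q` has the same winding number `0` as `f`, although `Q z₀ = 0`.
-/

open Polynomial

lemma exp_ofReal_mul_I_mem_sphere (t : ℝ) : exp (t * I) ∈ sphere (0 : ℂ) 1 := by
  simp [norm_exp_ofReal_mul_I]

lemma ContinuousOn.continuous_comp_exp_ofReal_mul_I {g : ℂ → ℂ}
    (hg : ContinuousOn g (sphere 0 1)) : Continuous fun t : ℝ => g (exp (t * I)) :=
  hg.comp_continuous (by fun_prop) exp_ofReal_mul_I_mem_sphere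

lemma hasWindingNumber_const (c : ℂ) : HasWindingNumber (fun _ => c) 0 :=
  ⟨fun _ => arg c, continuous_const, fun _ => (norm_mul_exp_arg_mul_I c).symm, by simp⟩

lemma hasWindingNumber_id : HasWindingNumber (fun z => z) 1 :=
  ⟨fun t => t, continuous_id, fun t => by simp [norm_exp_ofReal_mul_I], by simp⟩

lemma hasWindingNumber_zero_of_mapsTo_slitPlane {g : ℂ → ℂ} (hc : ContinuousOn g (sphere 0 1))
    (hg : MapsTo g (sphere 0 1) slitPlane) : HasWindingNumber g 0 := by
  refine ⟨fun t => arg (g (exp (t * I))), ?_, fun t => (norm_mul_exp_arg_mul_I _).symm, ?_⟩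
  · exact continuousOn_arg.comp_continuous hc.continuous_comp_exp_ofReal_mul_I fun t =>
      hg (exp_ofReal_mul_I_mem_sphere t)
  · simp

namespace HasWindingNumber

variable {g h : ℂ → ℂ} {m n : ℤ}

lemma congr (hg : HasWindingNumber g n) (hgh : ∀ t : ℝ, g (exp (t * I)) = h (exp (t * I))) :
    HasWindingNumber h n := by
  obtain ⟨θ, hθc, hθ, hθn⟩ := hg
  exact ⟨θ, hθc, fun t => by rw [← hgh t]; exact hθ t, hθn⟩

lemma mul (hg : HasWindingNumber g m) (hh : HasWindingNumber h n) :
    HasWindingNumber (fun z => g z * h z) (m + n) := by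
  obtain ⟨θ, hθc, hθ, hθm⟩ := hg
  obtain ⟨φ, hφc, hφ, hφn⟩ := hh
  refine ⟨θ + φ, hθc.add hφc, fun t => ?_, ?_⟩
  · simp only [Pi.add_apply, norm_mul, ofReal_mul, ofReal_add, add_mul, Complex.exp_add]
    conv_lhs => rw [hθ t, hφ t]
    ring
  · simp only [Pi.add_apply, Int.cast_add]
    linarith

lemma unique (hg : ∀ ζ ∈ sphere (0 : ℂ) 1, g ζ ≠ 0) (hm : HasWindingNumber g m)
    (hn : HasWindingNumber g n) : m = n := by
  obtain ⟨θ, hθc, hθ, hθm⟩ := hm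
  obtain ⟨φ, hφc, hφ, hφn⟩ := hn
  have hmem : ∀ t, θ t - φ t ∈ AddSubgroup.zmultiples (2 * π) := by
    intro t
    have hexp : exp (θ t * I) = exp (φ t * I) :=
      mul_left_cancel₀ (by simpa using hg _ (exp_ofReal_mul_I_mem_sphere t))
        ((hθ t).symm.trans (hφ t))
    obtain ⟨k, hk⟩ := exp_eq_exp_iff_exists_int.1 hexp
    have : θ t = φ t + k * (2 * π) := by simpa using congrArg im hk
    exact ⟨k, by simp only [zsmul_eq_mul]; linarith⟩
  have hdisc : IsDiscrete (AddSubgroup.zmultiples (2 * π) : Set ℝ) :=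
    isDiscrete_iff_discreteTopology.2
      (inferInstanceAs (DiscreteTopology (AddSubgroup.zmultiples _)))
  have hconst := isPreconnected_univ.constant_of_mapsTo hdisc (hθc.sub hφc).continuousOn
    (fun t _ => hmem t) (mem_univ (2 * π)) (mem_univ 0)
  have : 2 * π * (m : ℝ) = 2 * π * n := by
    simp only [Pi.sub_apply] at hconst
    linarith
  exact_mod_cast mul_left_cancel₀ (by positivity) this

lemma of_norm_sub_lt (hh : HasWindingNumber h n) (hgc : ContinuousOn g (sphere 0 1))
    (hhc : ContinuousOn h (sphere 0 1)) (hlt : ∀ ζ ∈ sphere (0 : ℂ) 1, ‖g ζ - h ζ‖ < ‖h ζ‖) :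
    HasWindingNumber g n := by
  have hh0 : ∀ ζ ∈ sphere (0 : ℂ) 1, h ζ ≠ 0 := fun ζ hζ h0 =>
    (norm_nonneg (g ζ)).not_gt (by simpa [h0] using hlt ζ hζ)
  have hq : HasWindingNumber (fun z => g z / h z) 0 := by
    refine hasWindingNumber_zero_of_mapsTo_slitPlane (hgc.div hhc hh0) fun ζ hζ => ?_
    apply ball_one_subset_slitPlane
    rw [mem_ball, Complex.dist_eq, div_sub_one (hh0 ζ hζ), norm_div,
      div_lt_one (norm_pos_iff.2 (hh0 ζ hζ))]
    exact hlt ζ hζ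
  simpa using (hq.mul hh).congr fun t => div_mul_cancel₀ _ (hh0 _ (exp_ofReal_mul_I_mem_sphere t))

end HasWindingNumber

lemma hasWindingNumber_sub_const_of_norm_lt_one {a : ℂ} (ha : ‖a‖ < 1) :
    HasWindingNumber (fun z => z - a) 1 :=
  hasWindingNumber_id.of_norm_sub_lt (by fun_prop) (by fun_prop) fun ζ hζ => by
    simpa [mem_sphere_zero_iff_norm.1 hζ] using ha

lemma hasWindingNumber_sub_const_of_one_lt_norm {a : ℂ} (ha : 1 < ‖a‖) :
    HasWindingNumber (fun z => z - a) 0 :=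
  (hasWindingNumber_const (-a)).of_norm_sub_lt (by fun_prop) (by fun_prop) fun ζ hζ => by
    simpa [mem_sphere_zero_iff_norm.1 hζ] using ha

lemma hasWindingNumber_multiset_prod_sub (s : Multiset ℂ) (hs : ∀ b ∈ s, ‖b‖ ≠ 1) :
    HasWindingNumber (fun z => (s.map (z - ·)).prod) (s.filter (‖·‖ < 1)).card := by
  induction s using Multiset.induction_on with
  | empty => simpa using hasWindingNumber_const 1
  | cons b s ih =>
    have hb : HasWindingNumber (fun z => z - b) (if ‖b‖ < 1 then 1 else 0) := by
      rcases (hs b (Multiset.mem_cons_self b s)).lt_or_gt with h | h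
      · simpa [h] using hasWindingNumber_sub_const_of_norm_lt_one h
      · simpa [h.not_gt] using hasWindingNumber_sub_const_of_one_lt_norm h
    have := hb.mul (ih fun c hc => hs c (Multiset.mem_cons_of_mem hc))
    rw [Multiset.filter_cons]
    split_ifs at this ⊢ <;> simpa [add_comm] using this

namespace Polynomial

lemma hasWindingNumber_eval (Q : ℂ[X]) (hQ : ∀ b ∈ Q.roots, ‖b‖ ≠ 1) :
    HasWindingNumber Q.eval (Q.roots.filter (‖·‖ < 1)).card := by
  have := (hasWindingNumber_const Q.leadingCoeff).mul (hasWindingNumber_multiset_prod_sub _ hQ)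
  rw [zero_add] at this
  exact this.congr fun t => ((IsAlgClosed.splits Q).eval_eq_prod_roots _).symm

lemma eval_ne_zero_of_hasWindingNumber_zero {Q : ℂ[X]} (hQ : ∀ ζ ∈ sphere (0 : ℂ) 1, Q.eval ζ ≠ 0)
    (hw : HasWindingNumber Q.eval 0) {z : ℂ} (hz : ‖z‖ < 1) : Q.eval z ≠ 0 := by
  intro hQz
  have hQ0 : Q ≠ 0 := by
    rintro rfl
    exact hQ 1 (by simp) eval_zero
  have hroots : ∀ b ∈ Q.roots, ‖b‖ ≠ 1 := fun b hb h1 =>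
    hQ b (mem_sphere_zero_iff_norm.2 h1) (isRoot_of_mem_roots hb)
  have hcard := hw.unique hQ (Q.hasWindingNumber_eval hroots)
  have hz_mem : z ∈ Q.roots.filter (‖·‖ < 1) := Multiset.mem_filter.2 ⟨(mem_roots hQ0).2 hQz, hz⟩
  exact (Multiset.card_pos_iff_exists_mem.2 ⟨z, hz_mem⟩).ne (by exact_mod_cast hcard)

end Polynomial

lemma FormalMultilinearSeries.partialSum_eq_eval (p : FormalMultilinearSeries ℂ ℂ ℂ) (n : ℕ)
    (z : ℂ) : p.partialSum n z = (∑ k ∈ Finset.range n, C (p.coeff k) * X ^ k).eval z := by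
  rw [FormalMultilinearSeries.partialSum, eval_finsetSum]
  refine Finset.sum_congr rfl fun k _ => ?_
  rw [FormalMultilinearSeries.apply_eq_pow_smul_coeff, smul_eq_mul, eval_mul, eval_C, eval_pow,
    eval_X, mul_comm]

lemma exists_polynomial_norm_sub_lt_of_differentiableOn_ball {F : ℂ → ℂ} {R : ℝ} (hR : 1 < R)
    (hF : DifferentiableOn ℂ F (ball 0 R)) {ε : ℝ} (hε : 0 < ε) :
    ∃ P : ℂ[X], ∀ z ∈ closedBall (0 : ℂ) 1, ‖P.eval z - F z‖ < ε := by
  obtain ⟨R₁, h1R₁, hR₁R⟩ := exists_between hR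
  obtain ⟨r, h1r, hrR₁⟩ := exists_between h1R₁
  lift R₁ to NNReal using by linarith
  lift r to NNReal using by linarith
  have hps := (hF.mono (closedBall_subset_ball hR₁R)).hasFPowerSeriesOnBall
    (by exact_mod_cast zero_lt_one.trans h1R₁)
  obtain ⟨N, hN⟩ := (Metric.tendstoUniformlyOn_iff.1
    (hps.tendstoUniformlyOn (by exact_mod_cast hrR₁)) ε hε).exists
  refine ⟨∑ k ∈ Finset.range N, C ((cauchyPowerSeries F 0 R₁).coeff k) * X ^ k, fun z hz => ?_⟩
  rw [← FormalMultilinearSeries.partialSum_eq_eval, ← Complex.dist_eq, dist_comm]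
  simpa using hN z (closedBall_subset_ball h1r hz)

lemma exists_norm_comp_mul_sub_lt {f : ℂ → ℂ} (hc : ContinuousOn f (closedBall 0 1)) {ε : ℝ}
    (hε : 0 < ε) : ∃ ρ ∈ Ioo (0 : ℝ) 1, ∀ z ∈ closedBall (0 : ℂ) 1, ‖f (ρ * z) - f z‖ < ε := by
  obtain ⟨δ, hδ, hfδ⟩ := Metric.uniformContinuousOn_iff.1
    ((isCompact_closedBall 0 1).uniformContinuousOn_of_continuous hc) ε hε
  obtain ⟨ρ, hρ, hρ1⟩ := exists_between (max_lt zero_lt_one (sub_lt_self 1 hδ))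
  have hρ0 : 0 < ρ := (le_max_left _ _).trans_lt hρ
  have hρδ : 1 - δ < ρ := (le_max_right _ _).trans_lt hρ
  refine ⟨ρ, ⟨hρ0, hρ1⟩, fun z hz => ?_⟩
  have hz1 : ‖z‖ ≤ 1 := mem_closedBall_zero_iff.1 hz
  rw [← Complex.dist_eq]
  refine hfδ _ (mem_closedBall_zero_iff.2 ?_) _ hz ?_
  · rw [norm_mul, norm_real, Real.norm_of_nonneg hρ0.le]
    nlinarith
  · rw [Complex.dist_eq, show (ρ : ℂ) * z - z = ((ρ - 1 : ℝ) : ℂ) * z by push_cast; ring,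
      norm_mul, norm_real, Real.norm_of_nonpos (by linarith)]
    nlinarith

theorem exists_polynomial_norm_sub_lt {f : ℂ → ℂ} (hc : ContinuousOn f (closedBall 0 1))
    (hd : DifferentiableOn ℂ f (ball 0 1)) {ε : ℝ} (hε : 0 < ε) :
    ∃ P : ℂ[X], ∀ z ∈ closedBall (0 : ℂ) 1, ‖P.eval z - f z‖ < ε := by
  obtain ⟨ρ, ⟨hρ0, hρ1⟩, hρ⟩ := exists_norm_comp_mul_sub_lt hc (half_pos hε)
  have hF : DifferentiableOn ℂ (fun z => f (ρ * z)) (ball 0 ρ⁻¹) := by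
    refine hd.comp (by fun_prop) fun z hz => ?_
    rw [mem_ball_zero_iff] at hz ⊢
    calc ‖(ρ : ℂ) * z‖ = ρ * ‖z‖ := by rw [norm_mul, norm_real, Real.norm_of_nonneg hρ0.le]
      _ < ρ * ρ⁻¹ := mul_lt_mul_of_pos_left hz hρ0
      _ = 1 := mul_inv_cancel₀ hρ0.ne'
  obtain ⟨P, hP⟩ := exists_polynomial_norm_sub_lt_of_differentiableOn_ball
    ((one_lt_inv₀ hρ0).2 hρ1) hF (half_pos hε)
  refine ⟨P, fun z hz => ?_⟩
  calc ‖P.eval z - f z‖ ≤ ‖P.eval z - f (ρ * z)‖ + ‖f (ρ * z) - f z‖ :=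
        norm_sub_le_norm_sub_add_norm_sub _ _ _
    _ < ε / 2 + ε / 2 := add_lt_add (hP z hz) (hρ z hz)
    _ = ε := add_halves ε

theorem stmt_6 (f : ℂ → ℂ)
    (hc : ContinuousOn f (closedBall (0:ℂ) 1))
    (hd : DifferentiableOn ℂ f (ball (0:ℂ) 1))
    (hnz : ∀ ζ : ℂ, ‖ζ‖ = 1 → f ζ ≠ 0)
    (hw : HasWindingNumber f 0) :
    ∀ z ∈ ball (0:ℂ) 1, f z ≠ 0 := by
  intro z₀ hz₀ hfz₀
  have hcs : ContinuousOn f (sphere 0 1) := hc.mono sphere_subset_closedBall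
  obtain ⟨ζ₀, hζ₀, hmin⟩ := (isCompact_sphere (0 : ℂ) 1).exists_isMinOn
    (NormedSpace.sphere_nonempty.2 zero_le_one) (continuous_norm.comp_continuousOn hcs)
  have hm : 0 < ‖f ζ₀‖ := norm_pos_iff.2 (hnz ζ₀ (mem_sphere_zero_iff_norm.1 hζ₀))
  obtain ⟨P, hP⟩ := exists_polynomial_norm_sub_lt hc hd (half_pos hm)
  set Q := P - C (P.eval z₀)
  have hQf : ∀ ζ ∈ sphere (0 : ℂ) 1, ‖Q.eval ζ - f ζ‖ < ‖f ζ‖ := fun ζ hζ =>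
    calc ‖Q.eval ζ - f ζ‖ = ‖(P.eval ζ - f ζ) - (P.eval z₀ - f z₀)‖ := by
          simp [Q, hfz₀, sub_right_comm]
      _ ≤ ‖P.eval ζ - f ζ‖ + ‖P.eval z₀ - f z₀‖ := norm_sub_le _ _
      _ < ‖f ζ₀‖ / 2 + ‖f ζ₀‖ / 2 :=
        add_lt_add (hP ζ (sphere_subset_closedBall hζ)) (hP z₀ (ball_subset_closedBall hz₀))
      _ ≤ ‖f ζ‖ := (add_halves _).trans_le (hmin hζ)
  have hQ : ∀ ζ ∈ sphere (0 : ℂ) 1, Q.eval ζ ≠ 0 := fun ζ hζ h0 => by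
    simpa [h0] using hQf ζ hζ
  have hwQ : HasWindingNumber Q.eval 0 :=
    hw.of_norm_sub_lt Q.continuous.continuousOn hcs hQf
  exact eval_ne_zero_of_hasWindingNumber_zero hQ hwQ (mem_ball_zero_iff.1 hz₀) (by simp [Q])
end

section
/- Let a₁, a₂ ∈ ℝ and b > 0 with (a₁² − b²)(a₂² − b²) ≥ 4b⁴. Then sup_{ω ∈ ℝ} √(ω² + b²) / (√(ω² + (a₁² + b²)/2) · √(ω² + (a₂² + b²)/2)) = √2 / (√(a₁² − b²) + √(a₂² − b²)). -/
open Real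

theorem stmt_15 (a₁ a₂ b : ℝ) (hb : 0 < b)
    (h : 4 * b^4 ≤ (a₁^2 - b^2) * (a₂^2 - b^2)) :
    (⨆ ω : ℝ, Real.sqrt (ω^2 + b^2) /
        (Real.sqrt (ω^2 + (a₁^2 + b^2)/2) * Real.sqrt (ω^2 + (a₂^2 + b^2)/2)))
      = Real.sqrt 2 / (Real.sqrt (a₁^2 - b^2) + Real.sqrt (a₂^2 - b^2)) := by
  have hb2 : 0 < b^2 := by positivity
  have hc₁ : 0 < a₁^2 - b^2 := by nlinarith [sq_nonneg a₁, sq_nonneg a₂, sq_nonneg (a₁*a₂)]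
  have hc₂ : 0 < a₂^2 - b^2 := by nlinarith [sq_nonneg a₁, sq_nonneg a₂, sq_nonneg (a₁*a₂)]
  set s1 := Real.sqrt (a₁^2 - b^2) with hs1def
  set s2 := Real.sqrt (a₂^2 - b^2) with hs2def
  have hs1 : s1^2 = a₁^2 - b^2 := Real.sq_sqrt hc₁.le
  have hs2 : s2^2 = a₂^2 - b^2 := Real.sq_sqrt hc₂.le
  have hs1p : 0 < s1 := Real.sqrt_pos.2 hc₁
  have hs2p : 0 < s2 := Real.sqrt_pos.2 hc₂
  have hsum : 0 < s1 + s2 := by linarith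
  have hss : 2*b^2 ≤ s1*s2 := by
    nlinarith [mul_pos hs1p hs2p, hs1, hs2, h]
  have hR : Real.sqrt 2 / (s1+s2) = Real.sqrt (2/(s1+s2)^2) := by
    rw [Real.sqrt_div (by norm_num), Real.sqrt_sq hsum.le]
  have key : ∀ ω : ℝ, Real.sqrt (ω^2 + b^2) /
      (Real.sqrt (ω^2 + (a₁^2 + b^2)/2) * Real.sqrt (ω^2 + (a₂^2 + b^2)/2))
      ≤ Real.sqrt 2 / (s1+s2) := by
    intro ω
    have hX : (0:ℝ) < ω^2 + (a₁^2+b^2)/2 := by positivity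
    have hY : (0:ℝ) < ω^2 + (a₂^2+b^2)/2 := by positivity
    have ht : (0:ℝ) < ω^2 + b^2 := by positivity
    rw [← Real.sqrt_mul hX.le, ← Real.sqrt_div ht.le, hR]
    apply Real.sqrt_le_sqrt
    rw [div_le_div_iff₀ (by positivity) (by positivity)]
    nlinarith [sq_nonneg (2*(ω^2+b^2) - s1*s2), hs1, hs2]
  have hbdd : BddAbove (Set.range fun ω : ℝ => Real.sqrt (ω^2 + b^2) /
      (Real.sqrt (ω^2 + (a₁^2 + b^2)/2) * Real.sqrt (ω^2 + (a₂^2 + b^2)/2))) := by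
    refine ⟨Real.sqrt 2 / (s1+s2), ?_⟩
    rintro x ⟨ω, rfl⟩
    exact key ω
  set ω₀ := Real.sqrt (s1*s2/2 - b^2) with hω₀def
  have hω₀nn : (0:ℝ) ≤ s1*s2/2 - b^2 := by linarith
  have hω₀sq : ω₀^2 = s1*s2/2 - b^2 := Real.sq_sqrt hω₀nn
  have hval : Real.sqrt (ω₀^2 + b^2) /
      (Real.sqrt (ω₀^2 + (a₁^2 + b^2)/2) * Real.sqrt (ω₀^2 + (a₂^2 + b^2)/2))
      = Real.sqrt 2 / (s1+s2) := by
    have hX : (0:ℝ) < ω₀^2 + (a₁^2+b^2)/2 := by positivity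
    have hY : (0:ℝ) < ω₀^2 + (a₂^2+b^2)/2 := by positivity
    have ht : (0:ℝ) < ω₀^2 + b^2 := by positivity
    rw [← Real.sqrt_mul hX.le, ← Real.sqrt_div ht.le, hR]
    congr 1
    rw [div_eq_div_iff (by positivity) (by positivity), hω₀sq]
    linear_combination (s1*s2/2 + (a₂^2-b^2)/2) * hs1 + (s1*s2/2 + s1^2/2) * hs2
  apply le_antisymm
  · exact ciSup_le key
  · calc Real.sqrt 2 / (s1+s2)
        = Real.sqrt (ω₀^2 + b^2) /
          (Real.sqrt (ω₀^2 + (a₁^2 + b^2)/2) * Real.sqrt (ω₀^2 + (a₂^2 + b^2)/2)) := hval.symm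
      _ ≤ _ := le_ciSup hbdd ω₀
end

section
/- Let a₁, a₂ ∈ ℝ and b > 0 with (a₁² − b²)(a₂² − b²) < 4b⁴. Then sup_{ω ∈ ℝ} √(ω² + b²) / (√(ω² + (a₁² + b²)/2) · √(ω² + (a₂² + b²)/2)) = 2b / (√(a₁² + b²) · √(a₂² + b²)), and the supremum is attained at ω = 0. -/
open Real

theorem stmt_16 (a₁ a₂ b : ℝ) (hb : 0 < b)
    (h : (a₁^2 - b^2) * (a₂^2 - b^2) < 4 * b^4) :
    (⨆ ω : ℝ, Real.sqrt (ω^2 + b^2) /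
        (Real.sqrt (ω^2 + (a₁^2 + b^2)/2) * Real.sqrt (ω^2 + (a₂^2 + b^2)/2)))
      = 2 * b / (Real.sqrt (a₁^2 + b^2) * Real.sqrt (a₂^2 + b^2)) ∧
    Real.sqrt ((0:ℝ)^2 + b^2) /
        (Real.sqrt ((0:ℝ)^2 + (a₁^2 + b^2)/2) * Real.sqrt ((0:ℝ)^2 + (a₂^2 + b^2)/2))
      = 2 * b / (Real.sqrt (a₁^2 + b^2) * Real.sqrt (a₂^2 + b^2)) := by
  have hA₁ : (0:ℝ) < (a₁^2 + b^2)/2 := by positivity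
  have hA₂ : (0:ℝ) < (a₂^2 + b^2)/2 := by positivity
  set f : ℝ → ℝ := fun ω => Real.sqrt (ω^2 + b^2) /
      (Real.sqrt (ω^2 + (a₁^2 + b^2)/2) * Real.sqrt (ω^2 + (a₂^2 + b^2)/2)) with hf
  -- rewrite f as sqrt of a quotient
  have hform : ∀ ω : ℝ, f ω = Real.sqrt ((ω^2 + b^2) /
      ((ω^2 + (a₁^2 + b^2)/2) * (ω^2 + (a₂^2 + b^2)/2))) := by
    intro ω
    rw [Real.sqrt_div (by positivity), Real.sqrt_mul (by positivity)]
  have hle : ∀ ω : ℝ, f ω ≤ f 0 := by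
    intro ω
    rw [hform, hform]
    apply Real.sqrt_le_sqrt
    rw [div_le_div_iff₀ (by positivity) (by positivity)]
    nlinarith [sq_nonneg ω, sq_nonneg (ω*ω), sq_nonneg (ω*b), sq_nonneg b, mul_pos hb hb,
      mul_nonneg (sq_nonneg ω) (sq_nonneg ω)]
  have h0 : f 0 = 2 * b / (Real.sqrt (a₁^2 + b^2) * Real.sqrt (a₂^2 + b^2)) := by
    have s2 : Real.sqrt 2 * Real.sqrt 2 = 2 := Real.mul_self_sqrt (by norm_num)
    have e1 : Real.sqrt ((0:ℝ)^2 + (a₁^2 + b^2)/2) = Real.sqrt (a₁^2 + b^2) / Real.sqrt 2 := by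
      rw [show (0:ℝ)^2 + (a₁^2 + b^2)/2 = (a₁^2 + b^2)/2 by ring,
        Real.sqrt_div (by positivity)]
    have e2 : Real.sqrt ((0:ℝ)^2 + (a₂^2 + b^2)/2) = Real.sqrt (a₂^2 + b^2) / Real.sqrt 2 := by
      rw [show (0:ℝ)^2 + (a₂^2 + b^2)/2 = (a₂^2 + b^2)/2 by ring,
        Real.sqrt_div (by positivity)]
    have e3 : Real.sqrt ((0:ℝ)^2 + b^2) = b := by
      rw [show (0:ℝ)^2 + b^2 = b^2 by ring, Real.sqrt_sq hb.le]
    have h1 : (0:ℝ) < Real.sqrt (a₁^2 + b^2) := Real.sqrt_pos.mpr (by positivity)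
    have h2 : (0:ℝ) < Real.sqrt (a₂^2 + b^2) := Real.sqrt_pos.mpr (by positivity)
    have hs2 : (0:ℝ) < Real.sqrt 2 := Real.sqrt_pos.mpr (by norm_num)
    rw [hf]
    simp only [e1, e2, e3]
    field_simp
    nlinarith [s2]
  refine ⟨?_, h0⟩
  rw [← h0]
  exact le_antisymm (ciSup_le hle) (le_ciSup ⟨f 0, Set.forall_mem_range.mpr hle⟩ 0)
end

section
/- Let T > 0, b > 0, and a₁, a₂ ∈ ℝ \ {b}. Define, for Re(s) > 0, f(s) = ((s̄ − b)(s − b)e^{−2Re(s)T} + (s̄ − a₁)(s − a₂)) / ((√2·s̄ + √(a₁² + b²))(√2·s + √(a₂² + b²))). Then there exist δ₀ > 0 and m > 0 such that whenever |a₁ − a₂| < δ₀, one has Re(f(s)) > m for all s with Re(s) > 0. -/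
open Complex Real

set_option maxHeartbeats 1000000 in
theorem stmt_17 (T b a₁ : ℝ) (hT : 0 < T) (hb : 0 < b) (ha₁ : a₁ ≠ b) :
    ∃ δ₀ > (0:ℝ), ∃ m > (0:ℝ), ∀ a₂ : ℝ, a₂ ≠ b → |a₁ - a₂| < δ₀ →
      ∀ s : ℂ, 0 < s.re →
        m < ((((starRingEnd ℂ) s - (b:ℂ)) * (s - (b:ℂ)) * (Real.exp (-2 * s.re * T) : ℂ)
              + ((starRingEnd ℂ) s - (a₁:ℂ)) * (s - (a₂:ℂ))) /
            (((Real.sqrt 2 : ℂ) * (starRingEnd ℂ) s + (Real.sqrt (a₁^2 + b^2) : ℂ)) *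
             ((Real.sqrt 2 : ℂ) * s + (Real.sqrt (a₂^2 + b^2) : ℂ)))).re := by
  obtain ⟨q, hqdef⟩ : ∃ t : ℝ, Real.sqrt 2 = t := ⟨_, rfl⟩
  have hq0 : 0 < q := hqdef ▸ Real.sqrt_pos.2 (by norm_num)
  have hq2 : q ^ 2 = 2 := by rw [← hqdef]; exact Real.sq_sqrt (by norm_num)
  have hqle : q ≤ 3/2 := by nlinarith only [hq0, hq2]
  obtain ⟨c, hcdef⟩ : ∃ t : ℝ, Real.sqrt (a₁ ^ 2 + b ^ 2) = t := ⟨_, rfl⟩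
  have hc0 : 0 < c := hcdef ▸ Real.sqrt_pos.2 (by positivity)
  have hc2 : c ^ 2 = a₁ ^ 2 + b ^ 2 := by rw [← hcdef]; exact Real.sq_sqrt (by positivity)
  have ha1c : |a₁| ≤ c := by
    nlinarith only [_root_.sq_abs a₁, abs_nonneg a₁, hc0, hc2, sq_nonneg b]
  have hbc : b ≤ c := by nlinarith only [sq_nonneg a₁, hb, hc0, hc2]
  rw [hqdef, hcdef]
  obtain ⟨d, hddef⟩ : ∃ t : ℝ, |a₁ - b| = t := ⟨_, rfl⟩
  have hd0 : 0 < d := hddef ▸ abs_pos.2 (sub_ne_zero.2 ha₁)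
  have hd2 : d ^ 2 = (a₁ - b) ^ 2 := by rw [← hddef]; exact _root_.sq_abs _
  obtain ⟨p, hpdef⟩ : ∃ t : ℝ, |a₁| = t := ⟨_, rfl⟩
  have hp0 : 0 ≤ p := hpdef ▸ abs_nonneg _
  have hpc : p ≤ c := hpdef ▸ ha1c
  have hpa : a₁ ≤ p := hpdef ▸ le_abs_self _
  have hp2 : p ^ 2 = a₁ ^ 2 := by rw [← hpdef]; exact _root_.sq_abs _
  obtain ⟨R, hRdef⟩ : ∃ t : ℝ, 2 * p + 2 * c = t := ⟨_, rfl⟩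
  have hR0 : 0 < R := by rw [← hRdef]; positivity
  have hRp : 2 * p + 2 * c = R := hRdef
  obtain ⟨ER, hERdef⟩ : ∃ t : ℝ, Real.exp (-2 * R * T) = t := ⟨_, rfl⟩
  have hER : (0:ℝ) < ER := hERdef ▸ Real.exp_pos _
  have hER1 : ER ≤ 1 := by
    rw [← hERdef, show (1:ℝ) = Real.exp 0 by simp]
    exact Real.exp_le_exp.2 (by nlinarith only [mul_pos hR0 hT])
  have hqR : 0 < q * R + 2 * c := by positivity
  obtain ⟨m₀', hm'def⟩ : ∃ t : ℝ, d ^ 2 * ER / (4 * (q * R + 2 * c) ^ 2) = t := ⟨_, rfl⟩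
  have hm'0 : 0 < m₀' := by rw [← hm'def]; positivity
  have hm'eq : m₀' * (q * R + 2 * c) ^ 2 = d ^ 2 * ER / 4 := by
    rw [← hm'def]; field_simp
  obtain ⟨m₀, hm₀def⟩ : ∃ t : ℝ, min (1/24 : ℝ) m₀' = t := ⟨_, rfl⟩
  have hm₀0 : 0 < m₀ := hm₀def ▸ lt_min (by norm_num) hm'0
  have hm₀24 : m₀ ≤ 1/24 := hm₀def ▸ min_le_left _ _
  have hm₀m' : m₀ ≤ m₀' := hm₀def ▸ min_le_right _ _
  -- baseline estimate: uniform lower bound in the unperturbed case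
  have baseline : ∀ x y r E : ℝ, 0 < x → 0 ≤ r → r^2 = x^2 + y^2 →
      E = Real.exp (-2 * x * T) →
      m₀ * (q * r + 2*c)^2 ≤ E * ((x-b)^2 + y^2) + ((x-a₁)^2 + y^2) := by
    intro x y r E hx hr0 hr2 hEdef
    have hxr : x ≤ r := by nlinarith only [sq_nonneg y, hx, hr0, hr2]
    have hEx : 0 < E := hEdef ▸ Real.exp_pos _
    rcases le_or_gt R r with hRr | hrR
    · -- |s| large
      have h1 : (r - p)^2 ≤ (x-a₁)^2 + y^2 := by
        nlinarith only [mul_nonneg (sub_nonneg.2 hpa) hx.le,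
          mul_nonneg hp0 (sub_nonneg.2 hxr), hr2, hp2]
      have h2a : p ≤ r/2 := by linarith only [hRr, hRp.symm, hc0, hp0]
      have h3 : r^2/4 ≤ (x-a₁)^2 + y^2 := by
        nlinarith only [h1, mul_nonneg (sub_nonneg.2 h2a)
          (by linarith only [h2a, hr0] : (0:ℝ) ≤ 3/2*r - p)]
      have hcr : c ≤ r/2 := by linarith only [hRr, hRp.symm, hc0, hp0]
      have hK : (q*r + 2*c)^2 ≤ 6 * r^2 := by
        nlinarith only [sq_nonneg r, hq2, hr0, hc0, hq0,
          mul_nonneg (sub_nonneg.2 hqle) (mul_nonneg hr0 hc0.le),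
          mul_nonneg (sub_nonneg.2 hcr) hr0, mul_nonneg (sub_nonneg.2 hcr) hc0.le]
      nlinarith only [mul_le_mul_of_nonneg_left hK hm₀0.le,
        mul_nonneg (sub_nonneg.2 hm₀24) (sq_nonneg r),
        mul_nonneg hEx.le (add_nonneg (sq_nonneg (x-b)) (sq_nonneg y)), h3]
    · have hqrR : q*r ≤ q*R := mul_le_mul_of_nonneg_left hrR.le hq0.le
      have hKR : (q*r+2*c)^2 ≤ (q*R+2*c)^2 := by
        nlinarith only [hqrR, mul_nonneg hq0.le hr0, mul_nonneg hq0.le hR0.le, hc0]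
      have hKey : m₀ * (q*r+2*c)^2 ≤ d^2 * ER / 4 := by
        have h1 : m₀ * (q*r+2*c)^2 ≤ m₀' * (q*R+2*c)^2 :=
          mul_le_mul hm₀m' hKR (sq_nonneg _) hm'0.le
        linarith only [h1, hm'eq]
      rcases le_or_gt (d^2/4) ((x-a₁)^2 + y^2) with hB | hB
      · nlinarith only [hKey, hB,
          mul_nonneg hEx.le (add_nonneg (sq_nonneg (x-b)) (sq_nonneg y)),
          mul_nonneg (sq_nonneg d) (sub_nonneg.2 hER1)]
      · have hA : d^2/4 ≤ (x-b)^2 + y^2 := by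
          nlinarith only [sq_nonneg (2*(x-a₁) + (a₁-b)), sq_nonneg y, hd2, hB.le]
        have hxR : x ≤ R := le_trans hxr hrR.le
        have hexp : ER ≤ E := by
          rw [← hERdef, hEdef]
          exact Real.exp_le_exp.2 (by nlinarith only [mul_le_mul_of_nonneg_right hxR hT.le])
        nlinarith only [hKey, sq_nonneg (x-a₁), sq_nonneg y,
          mul_le_mul_of_nonneg_right hexp (by positivity : (0:ℝ) ≤ d^2/4),
          mul_le_mul_of_nonneg_left hA hEx.le]
  -- choose δ₀ and m
  obtain ⟨w, hwdef⟩ : ∃ t : ℝ, Real.sqrt (m₀/2) = t := ⟨_, rfl⟩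
  have hw0 : 0 < w := hwdef ▸ Real.sqrt_pos.2 (by linarith only [hm₀0])
  have hw2 : w^2 = m₀/2 := by rw [← hwdef]; exact Real.sq_sqrt (by linarith only [hm₀0])
  obtain ⟨δ₀, hδdef⟩ : ∃ t : ℝ, min (c/2) (c * w) = t := ⟨_, rfl⟩
  have hδ0 : 0 < δ₀ := hδdef ▸ lt_min (by linarith only [hc0]) (mul_pos hc0 hw0)
  refine ⟨δ₀, hδ0, m₀/16, by linarith only [hm₀0], ?_⟩
  intro a₂ ha₂ hδ s hs
  obtain ⟨x, hxdef⟩ : ∃ t : ℝ, s.re = t := ⟨_, rfl⟩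
  obtain ⟨y, hydef⟩ : ∃ t : ℝ, s.im = t := ⟨_, rfl⟩
  rw [hxdef] at hs ⊢
  obtain ⟨c₂, hc₂def⟩ : ∃ t : ℝ, Real.sqrt (a₂^2 + b^2) = t := ⟨_, rfl⟩
  have hc₂0 : 0 < c₂ := hc₂def ▸ Real.sqrt_pos.2 (by positivity)
  have hc₂2 : c₂^2 = a₂^2 + b^2 := by rw [← hc₂def]; exact Real.sq_sqrt (by positivity)
  have ha2c : |a₂| ≤ c₂ := by
    nlinarith only [_root_.sq_abs a₂, abs_nonneg a₂, hc₂0, hc₂2, sq_nonneg b]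
  rw [hc₂def]
  have hε : |a₂ - a₁| < δ₀ := by rwa [abs_sub_comm]
  have hη : |c₂ - c| ≤ |a₂ - a₁| := by
    have hcc : 0 < c₂ + c := by linarith only [hc0, hc₂0]
    have key : |c₂ - c| * (c₂ + c) ≤ |a₂ - a₁| * (c₂ + c) := by
      calc |c₂ - c| * (c₂ + c) = |(c₂ - c) * (c₂ + c)| := by
            rw [abs_mul, abs_of_pos hcc]
        _ = |(a₂ - a₁) * (a₂ + a₁)| := by
            rw [show (c₂-c)*(c₂+c) = (a₂-a₁)*(a₂+a₁) by linear_combination hc₂2 - hc2]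
        _ = |a₂ - a₁| * |a₂ + a₁| := abs_mul _ _
        _ ≤ |a₂ - a₁| * (c₂ + c) := by
            apply mul_le_mul_of_nonneg_left _ (abs_nonneg _)
            calc |a₂ + a₁| ≤ |a₂| + |a₁| := abs_add_le _ _
              _ ≤ c₂ + c := add_le_add ha2c ha1c
    exact le_of_mul_le_mul_right key hcc
  have hδc : δ₀ ≤ c/2 := hδdef ▸ min_le_left _ _
  have hδm : δ₀^2 ≤ m₀/2 * c^2 := by
    have h1 : δ₀ ≤ c * w := hδdef ▸ min_le_right _ _
    nlinarith only [hδ0.le, h1, hw2, mul_nonneg hc0.le hw0.le, hc0]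
  have hεsq : (a₂-a₁)^2 ≤ δ₀^2 := by
    have h := abs_le.1 hε.le
    exact sq_le_sq' h.1 h.2
  have hη2 : (c₂-c)^2 ≤ (a₂-a₁)^2 := by
    have h := pow_le_pow_left₀ (abs_nonneg (c₂-c)) hη 2
    rwa [_root_.sq_abs, _root_.sq_abs] at h
  have hc₂ge : c/2 ≤ c₂ := by
    have h1 : -(|c₂ - c|) ≤ c₂ - c := neg_abs_le _
    linarith only [h1, hη, hε.le, hδc]
  have hc₂le : c₂ ≤ 3/2 * c := by
    have h1 : c₂ - c ≤ |c₂ - c| := le_abs_self _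
    linarith only [h1, hη, hε.le, hδc]
  obtain ⟨E, hEdef⟩ : ∃ t : ℝ, Real.exp (-2 * x * T) = t := ⟨_, rfl⟩
  have hE : 0 < E := hEdef ▸ Real.exp_pos _
  rw [hEdef]
  -- real and imaginary parts
  obtain ⟨Nre, hNre⟩ : ∃ t : ℝ, ((x-b)^2 + y^2) * E + ((x-a₁)*(x-a₂) + y^2) = t := ⟨_, rfl⟩
  obtain ⟨Nim, hNim⟩ : ∃ t : ℝ, y * (a₂ - a₁) = t := ⟨_, rfl⟩
  obtain ⟨Dre, hDre⟩ : ∃ t : ℝ, q^2*(x^2+y^2) + q*x*(c+c₂) + c*c₂ = t := ⟨_, rfl⟩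
  obtain ⟨Dim, hDim⟩ : ∃ t : ℝ, q*y*(c - c₂) = t := ⟨_, rfl⟩
  have hDre2 : 2*(x^2+y^2) + q*x*(c+c₂) + c*c₂ = Dre := by rw [← hDre, hq2]
  have hre : ((((starRingEnd ℂ) s - (b:ℂ)) * (s - (b:ℂ)) * (E : ℂ)
              + ((starRingEnd ℂ) s - (a₁:ℂ)) * (s - (a₂:ℂ))) /
            (((q : ℂ) * (starRingEnd ℂ) s + (c : ℂ)) *
             ((q : ℂ) * s + (c₂ : ℂ)))).re
      = (Nre*Dre + Nim*Dim)/(Dre^2 + Dim^2) := by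
    rw [← hNre, ← hNim, ← hDre, ← hDim]
    simp only [Complex.div_re, Complex.normSq_apply, Complex.mul_re, Complex.mul_im,
      Complex.add_re, Complex.add_im, Complex.sub_re, Complex.sub_im,
      Complex.ofReal_re, Complex.ofReal_im, Complex.conj_re, Complex.conj_im]
    rw [hxdef, hydef]
    ring
  rw [hre]
  -- denominator facts
  have hDrepos : 0 < Dre := by
    rw [← hDre2]
    nlinarith only [sq_nonneg x, sq_nonneg y, mul_pos hc0 hc₂0,
      mul_nonneg (mul_nonneg hq0.le hs.le) (by linarith only [hc0, hc₂0] : (0:ℝ) ≤ c + c₂)]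
  obtain ⟨r, hrdef⟩ : ∃ t : ℝ, Real.sqrt (x^2+y^2) = t := ⟨_, rfl⟩
  have hr0 : 0 ≤ r := hrdef ▸ Real.sqrt_nonneg _
  have hr2 : r^2 = x^2 + y^2 := by rw [← hrdef]; exact Real.sq_sqrt (by positivity)
  have hxr : x ≤ r := by nlinarith only [sq_nonneg y, hs, hr0, hr2]
  have hbase := baseline x y r E hs hr0 hr2 hEdef.symm
  obtain ⟨K, hKdef⟩ : ∃ t : ℝ, (q*r + 2*c)^2 = t := ⟨_, rfl⟩
  rw [hKdef] at hbase
  have hK0' : 0 < q*r + 2*c := by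
    nlinarith only [mul_nonneg hq0.le hr0, hc0]
  have hKpos : 0 < K := by rw [← hKdef]; exact pow_pos hK0' 2
  have hK2 : 2*r^2 + 4*(q*r*c) + 4*c^2 = K := by
    rw [← hKdef, show (q*r+2*c)^2 = q^2*r^2 + 4*(q*r*c) + 4*c^2 from by ring, hq2]
  have hDK : Dre ≤ K := by
    rw [← hDre2, ← hK2]
    nlinarith only [hr2,
      mul_nonneg (mul_nonneg hq0.le (sub_nonneg.2 hxr))
        (by linarith only [hc0, hc₂0] : (0:ℝ) ≤ c+c₂),
      mul_nonneg (mul_nonneg hq0.le hr0)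
        (by linarith only [hc₂le, hc0] : (0:ℝ) ≤ 3*c - c₂),
      mul_pos hc0 hc₂0, hc₂le, hc0, mul_le_mul_of_nonneg_left hc₂le hc0.le]
  have hK4c : 4*c^2 ≤ K := by
    rw [← hK2]
    nlinarith only [sq_nonneg r, mul_nonneg (mul_nonneg hq0.le hr0) hc0.le]
  have h2y : 2*y^2 ≤ Dre := by
    rw [← hDre2]
    nlinarith only [sq_nonneg x, mul_pos hc0 hc₂0,
      mul_nonneg (mul_nonneg hq0.le hs.le) (by linarith only [hc0, hc₂0] : (0:ℝ) ≤ c+c₂)]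
  have hδsq : δ₀^2 ≤ c^2/4 := by nlinarith only [hδ0.le, hδc, hc0]
  have hηsq : (c₂-c)^2 ≤ c^2/4 := le_trans (hη2.trans hεsq) hδsq
  have hc2D : c^2/2 ≤ Dre := by
    rw [← hDre2]
    nlinarith only [sq_nonneg x, sq_nonneg y,
      mul_nonneg (mul_nonneg hq0.le hs.le) (by linarith only [hc0, hc₂0] : (0:ℝ) ≤ c+c₂),
      mul_le_mul_of_nonneg_left hc₂ge hc0.le]
  have hDim2 : Dim^2 = 2*(y^2*(c-c₂)^2) := by
    rw [← hDim, show (q*y*(c-c₂))^2 = q^2*(y^2*(c-c₂)^2) from by ring, hq2]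
  have hηsq' : (c-c₂)^2 ≤ c^2/4 := by
    rw [show (c-c₂)^2 = (c₂-c)^2 from by ring]; exact hηsq
  have hQle : Dre^2 + Dim^2 ≤ 2*Dre^2 := by
    nlinarith only [hDim2, mul_le_mul h2y hηsq' (sq_nonneg (c-c₂)) hDrepos.le,
      mul_le_mul_of_nonneg_left hc2D hDrepos.le]
  have hQpos : 0 < Dre^2 + Dim^2 := by positivity
  -- lower bound on the numerator
  have habs_e : (a₂-a₁)*(x-a₁) ≤ (a₂-a₁)^2/2 + ((x-a₁)^2+y^2)/2 := by
    nlinarith only [sq_nonneg ((a₂-a₁)-(x-a₁)), sq_nonneg y]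
  have hNreLB : m₀*K/2 - (a₂-a₁)^2/2 ≤ Nre := by
    rw [← hNre]
    nlinarith only [hbase, habs_e,
      mul_nonneg hE.le (add_nonneg (sq_nonneg (x-b)) (sq_nonneg y))]
  have hqy : q*y^2 ≤ Dre := by
    nlinarith only [h2y, mul_nonneg (sub_nonneg.2 hqle) (sq_nonneg y)]
  have hec : -((a₂-a₁)^2) ≤ (a₂-a₁)*(c-c₂) := by
    nlinarith only [sq_nonneg ((a₂-a₁)+(c-c₂)), hη2]
  have hcross : -((a₂-a₁)^2*Dre) ≤ Nim*Dim := by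
    rw [← hNim, ← hDim]
    nlinarith only [mul_le_mul_of_nonneg_left hec (mul_nonneg hq0.le (sq_nonneg y)),
      mul_le_mul_of_nonneg_right hqy (sq_nonneg (a₂-a₁))]
  have hε8 : (a₂-a₁)^2 ≤ m₀*K/8 := by
    nlinarith only [hεsq, hδm, hK4c, hm₀0, mul_nonneg hm₀0.le (sub_nonneg.2 hK4c)]
  have hP : m₀/4*(K*Dre) ≤ Nre*Dre + Nim*Dim := by
    have h1 : (m₀*K/2 - (a₂-a₁)^2/2)*Dre ≤ Nre*Dre :=
      mul_le_mul_of_nonneg_right hNreLB hDrepos.le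
    nlinarith only [h1, hcross, mul_le_mul_of_nonneg_right hε8 hDrepos.le,
      mul_nonneg hm₀0.le (mul_nonneg hKpos.le hDrepos.le)]
  rw [lt_div_iff₀ hQpos]
  nlinarith only [hP,
    mul_le_mul_of_nonneg_left hQle (by linarith only [hm₀0] : (0:ℝ) ≤ m₀/16),
    mul_nonneg hm₀0.le (sub_nonneg.2 (mul_le_mul_of_nonneg_right hDK hDrepos.le)),
    mul_pos hm₀0 (mul_pos hKpos hDrepos)]
end
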